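/- Let θ = 0 and let ε ∈ ℂ with ε ≠ 0, ε⁻¹ ∉ ℤ, and 1+εk ≠ 0 for every integer k. Suppose G, H, D: ℤ×ℤ → ℂ satisfy, for all m,n,r,s,t ∈ ℤ: G(m,r)(1+2εr) − H(r,m)(1+εm) = (m/2−r)(1+2ε(m+r)); D(r,s)(1+2εs) + D(s,r)(1+2εr) = 2+2ε(r+s); (m−n)G(m+n,r) = G(n,r)G(m,n+r) − G(m,r)G(n,m+r); (m/2−r)H(m+r,n) = H(r,n)G(m,n+r) + n·H(r,m+n); (m/2−r)D(m+r,s) = −(r+s)D(r,s) − G(m,s)D(r,m+s); −2m = H(s,m)D(r,m+s) + H(r,m)D(s,m+r); 2G(r+s,t) = D(s,t)H(r,s+t) + D(r,t)H(s,r+t). Then for all m,t ∈ ℤ: D(2t,0) = 1, D(0,2t) = 1, H(m,m) = −m, G(m,m) = −3m/2, H(0,m) = −m, and G(m,0) = −m/2. -/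
import Mathlib


/-- Case (II) (θ = 0, Ramond) in the proof of Theorem 3.2: under the
normalized equations (3.6)–(3.12) with all indices in ℤ, and with ε ≠ 0, ε⁻¹ ∉ ℤ and
1 + εk ≠ 0 for all k ∈ ℤ, one has D(2t,0) = D(0,2t) = 1, H(m,m) = −m,
G(m,m) = −3m/2, H(0,m) = −m and G(m,0) = −m/2. -/
theorem Ramond_case_key_values (ε : ℂ)
    (hε0 : ε ≠ 0) (hεinv : ∀ k : ℤ, ε⁻¹ ≠ (k : ℂ))
    (hε : ∀ k : ℤ, 1 + ε * (k : ℂ) ≠ 0)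
    (G H D : ℤ → ℤ → ℂ)
    (e1 : ∀ m r : ℤ,
      G m r * (1 + 2 * ε * (r : ℂ)) - H r m * (1 + ε * (m : ℂ))
        = ((m : ℂ) / 2 - (r : ℂ)) * (1 + 2 * ε * ((m : ℂ) + (r : ℂ))))
    (e2 : ∀ r s : ℤ,
      D r s * (1 + 2 * ε * (s : ℂ)) + D s r * (1 + 2 * ε * (r : ℂ))
        = 2 + 2 * ε * ((r : ℂ) + (s : ℂ)))
    (e3 : ∀ m n r : ℤ,
      ((m : ℂ) - (n : ℂ)) * G (m + n) r
        = G n r * G m (n + r) - G m r * G n (m + r))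
    (e4 : ∀ m n r : ℤ,
      ((m : ℂ) / 2 - (r : ℂ)) * H (m + r) n
        = H r n * G m (n + r) + (n : ℂ) * H r (m + n))
    (e5 : ∀ m r s : ℤ,
      ((m : ℂ) / 2 - (r : ℂ)) * D (m + r) s
        = -((r : ℂ) + (s : ℂ)) * D r s - G m s * D r (m + s))
    (e6 : ∀ m r s : ℤ,
      -2 * (m : ℂ) = H s m * D r (m + s) + H r m * D s (m + r))
    (e7 : ∀ r s t : ℤ,
      2 * G (r + s) t = D s t * H r (s + t) + D r t * H s (r + t)) :
    ∀ m t : ℤ,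
      D (2 * t) 0 = 1 ∧ D 0 (2 * t) = 1 ∧
      H m m = -(m : ℂ) ∧ G m m = -3 * (m : ℂ) / 2 ∧
      H 0 m = -(m : ℂ) ∧ G m 0 = -(m : ℂ) / 2 := by
  -- L1 : D r r = 1
  have L1 : ∀ r : ℤ, D r r = 1 := by
    intro r
    have h := e2 r r
    have hc : D r r * (2 * (1 + ε * ((2*r : ℤ) : ℂ))) = 1 * (2 * (1 + ε * ((2*r : ℤ) : ℂ))) := by
      push_cast
      linear_combination h
    exact mul_right_cancel₀ (mul_ne_zero two_ne_zero (hε (2*r))) hc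
  -- L2 : H r 0 = 0
  have L2 : ∀ r : ℤ, H r 0 = 0 := by
    intro r
    have h := e6 0 r r
    simp only [zero_add] at h
    rw [L1 r] at h
    push_cast at h
    linear_combination (-1/2 : ℂ) * h
  -- L3 : G 0 r = -r
  have L3 : ∀ r : ℤ, G 0 r = -(r : ℂ) := by
    intro r
    have h := e1 0 r
    rw [L2 r] at h
    have hc : G 0 r * (1 + ε * ((2*r : ℤ) : ℂ)) = (-(r:ℂ)) * (1 + ε * ((2*r : ℤ) : ℂ)) := by
      push_cast at h ⊢
      linear_combination h
    exact mul_right_cancel₀ (hε (2*r)) hc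
  -- L4 : H (-m) (2m) = -2m
  have L4 : ∀ m : ℤ, H (-m) (2*m) = -2*(m:ℂ) := by
    intro m
    have h := e7 m (-m) m
    rw [show (m + -m : ℤ) = 0 by ring, show (-m + m : ℤ) = 0 by ring,
        show (m + m : ℤ) = 2*m by ring, L3 m, L2 m, L1 m] at h
    linear_combination -h
  -- L5 : D (-m) m = 1
  have L5 : ∀ m : ℤ, D (-m) m = 1 := by
    intro m
    rcases eq_or_ne m 0 with rfl | hm
    · simpa using L1 0
    · have hmC : (m:ℂ) ≠ 0 := Int.cast_ne_zero.mpr hm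
      have h := e6 (2*m) (-m) (-m)
      rw [show (2*m + -m : ℤ) = m by ring, L4 m] at h
      have hc : D (-m) m * ((-4)*(m:ℂ)) = 1 * ((-4)*(m:ℂ)) := by
        push_cast at h ⊢
        linear_combination -h
      exact mul_right_cancel₀ (mul_ne_zero (by norm_num) hmC) hc
  -- L6 : D m (-m) = 1
  have L6 : ∀ m : ℤ, D m (-m) = 1 := by
    intro m
    have h := e2 (-m) m
    rw [L5 m] at h
    have hc : D m (-m) * (1 + ε * ((-(2*m) : ℤ) : ℂ)) = 1 * (1 + ε * ((-(2*m) : ℤ) : ℂ)) := by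
      push_cast at h ⊢
      linear_combination h
    exact mul_right_cancel₀ (hε (-(2*m))) hc
  -- K : H r n * D r (n+r) = -n
  have K : ∀ n r : ℤ, H r n * D r (n + r) = -(n:ℂ) := by
    intro n r
    have h := e6 n r r
    linear_combination (-1/2 : ℂ) * h
  -- Hg0 : G m 0 in terms of H 0 m
  have Hg0 : ∀ m : ℤ, G m 0 = H 0 m * (1 + ε*(m:ℂ)) + (m:ℂ)/2*(1 + 2*ε*(m:ℂ)) := by
    intro m
    have h := e1 m 0
    push_cast at h
    linear_combination h
  -- Hz : H (-m) m = -2m - H 0 m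
  have Hz : ∀ m : ℤ, H (-m) m = -2*(m:ℂ) - H 0 m := by
    intro m
    have h := e6 m (-m) 0
    simp only [add_zero] at h
    rw [show (m + -m : ℤ) = 0 by ring, L5 m, L1 0] at h
    linear_combination -h
  -- P1 : factored quadratic for H 0 m
  have P1 : ∀ m : ℤ, (H 0 m + (m:ℂ)) * ((1 + ε*(m:ℂ)) * H 0 m + (m:ℂ)*(3 + 2*ε*(m:ℂ))) = 0 := by
    intro m
    have h := e4 m m (-m)
    rw [show (m + -m : ℤ) = 0 by ring, show (m + m : ℤ) = 2*m by ring,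
        L4 m, Hz m, Hg0 m] at h
    push_cast at h
    linear_combination h
  -- main : H 0 m = -m
  have main : ∀ m : ℤ, H 0 m = -(m:ℂ) := by
    intro m
    rcases eq_or_ne m 0 with rfl | hm
    · simpa using L2 0
    · have hmC : (m:ℂ) ≠ 0 := Int.cast_ne_zero.mpr hm
      have A1 := e6 m 0 0
      simp only [add_zero] at A1
      have A2 := e2 0 m
      push_cast at A2
      have A4 := e6 (-m) 0 0
      simp only [add_zero] at A4
      push_cast at A4
      have A5 := e2 0 (-m)
      push_cast at A5
      -- A3 : (2m - H 0 (-m)) * D m 0 = m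
      have hK1 := K (-m) m
      rw [show (-m + m : ℤ) = 0 by ring] at hK1
      push_cast at hK1
      have hV9 : H m (-m) = 2*(m:ℂ) - H 0 (-m) := by
        have h := e6 (-m) m 0
        simp only [add_zero] at h
        rw [show (-m + m : ℤ) = 0 by ring, L6 m, L1 0] at h
        push_cast at h
        linear_combination -h
      rw [hV9] at hK1
      have A3 : (2*(m:ℂ) - H 0 (-m)) * D m 0 = (m:ℂ) := by linear_combination hK1
      -- A6 : (2m + H 0 m) * D (-m) 0 = m
      have hK1' := K m (-m)
      rw [show (m + -m : ℤ) = 0 by ring, Hz m] at hK1'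
      have A6 : (2*(m:ℂ) + H 0 m) * D (-m) 0 = (m:ℂ) := by linear_combination -hK1'
      have hP' := P1 (-m)
      push_cast at hP'
      rcases mul_eq_zero.mp (P1 m) with h | h
      · linear_combination h
      · rcases mul_eq_zero.mp hP' with h' | h'
        · -- H 0 (-m) = m ; then D m 0 = 1, D 0 m = 1, H 0 m = -m
          have hv1 : D m 0 = 1 := by
            have hc : D m 0 * (m:ℂ) = 1 * (m:ℂ) := by
              linear_combination A3 + D m 0 * h'
            exact mul_right_cancel₀ hmC hc
          have hu1 : D 0 m = 1 := by
            have hc : D 0 m * (1 + ε * ((2*m : ℤ) : ℂ)) = 1 * (1 + ε * ((2*m : ℤ) : ℂ)) := by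
              push_cast
              linear_combination A2 - hv1
            exact mul_right_cancel₀ (hε (2*m)) hc
          linear_combination (-1/2 : ℂ) * A1 - H 0 m * hu1
        · -- both spurious branches: contradiction
          exfalso
          have c1 : (3 + 2*ε*(m:ℂ)) * D 0 m = 1 + ε*(m:ℂ) := by
            have hc : ((3 + 2*ε*(m:ℂ)) * D 0 m) * ((-2)*(m:ℂ)) = (1 + ε*(m:ℂ)) * ((-2)*(m:ℂ)) := by
              linear_combination (-(1 + ε*(m:ℂ))) * A1 - 2 * D 0 m * h
            exact mul_right_cancel₀ (mul_ne_zero (by norm_num) hmC) hc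
          have c3 : D m 0 = ε*(m:ℂ) - 1 := by
            have hc : D m 0 * (m:ℂ) = (ε*(m:ℂ) - 1) * (m:ℂ) := by
              linear_combination (-(1 - ε*(m:ℂ))) * A3 - D m 0 * h'
            exact mul_right_cancel₀ hmC hc
          have c4 : (6:ℂ)*(ε*(m:ℂ)) + 8 = 0 := by
            linear_combination (-(3 + 2*ε*(m:ℂ))) * A2 + (1 + 2*ε*(m:ℂ)) * c1 + (3 + 2*ε*(m:ℂ)) * c3
          have c1' : (3 - 2*ε*(m:ℂ)) * D 0 (-m) = 1 - ε*(m:ℂ) := by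
            have hc : ((3 - 2*ε*(m:ℂ)) * D 0 (-m)) * ((2)*(m:ℂ)) = (1 - ε*(m:ℂ)) * ((2)*(m:ℂ)) := by
              linear_combination (-(1 - ε*(m:ℂ))) * A4 - 2 * D 0 (-m) * h'
            exact mul_right_cancel₀ (mul_ne_zero (by norm_num) hmC) hc
          have c3' : D (-m) 0 = -(1 + ε*(m:ℂ)) := by
            have hc : D (-m) 0 * (m:ℂ) = (-(1 + ε*(m:ℂ))) * (m:ℂ) := by
              linear_combination (-(1 + ε*(m:ℂ))) * A6 + D (-m) 0 * h
            exact mul_right_cancel₀ hmC hc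
          have c4' : (6:ℂ)*(ε*(m:ℂ)) - 8 = 0 := by
            linear_combination (3 - 2*ε*(m:ℂ)) * A5 - (1 - 2*ε*(m:ℂ)) * c1' - (3 - 2*ε*(m:ℂ)) * c3'
          have : (16:ℂ) = 0 := by linear_combination c4 - c4'
          norm_num at this
  -- hu : D 0 n = 1
  have hu : ∀ n : ℤ, D 0 n = 1 := by
    intro n
    rcases eq_or_ne n 0 with rfl | hn
    · exact L1 0
    · have hnC : (n:ℂ) ≠ 0 := Int.cast_ne_zero.mpr hn
      have A1 := e6 n 0 0
      simp only [add_zero] at A1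
      rw [main n] at A1
      have hc : D 0 n * ((-2)*(n:ℂ)) = 1 * ((-2)*(n:ℂ)) := by
        linear_combination -A1
      exact mul_right_cancel₀ (mul_ne_zero (by norm_num) hnC) hc
  -- hv : D n 0 = 1
  have hv : ∀ n : ℤ, D n 0 = 1 := by
    intro n
    have h := e2 0 n
    rw [hu n] at h
    push_cast at h
    linear_combination h
  -- G m 0
  have hG0 : ∀ m : ℤ, G m 0 = -(m:ℂ)/2 := by
    intro m
    rw [Hg0 m, main m]
    ring
  -- G m m
  have hg1 : ∀ m : ℤ, G m m = -3*(m:ℂ)/2 := by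
    intro m
    have h := e5 m 0 m
    rw [show (m + 0 : ℤ) = m from add_zero m, show (m + m : ℤ) = 2*m by ring,
        L1 m, hu m, hu (2*m)] at h
    push_cast at h
    linear_combination h
  -- H m m
  have hHmm : ∀ m : ℤ, H m m = -(m:ℂ) := by
    intro m
    have h := e1 m m
    rw [hg1 m] at h
    have hc : H m m * (1 + ε*(m:ℂ)) = (-(m:ℂ)) * (1 + ε*(m:ℂ)) := by
      linear_combination -h
    exact mul_right_cancel₀ (hε m) hc
  intro m t
  exact ⟨hv (2*t), hu (2*t), hHmm m, hg1 m, main m, hG0 m⟩
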